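/- arXiv:0807.2318 — 7 statements merged into one kernel-verified Lean document; each statement's English description precedes it below -/
import Mathlib

section
/- If M is a column sufficient n×n matrix and (z¹,w¹), (z²,w²) are two solutions of the LCP w − Mz = q, w,z ≥ 0, wᵀz = 0 for the same right hand side q, then (z¹)ᵀw² = 0 and (z²)ᵀw¹ = 0. -/
open Matrix

/-- `M` is column sufficient. -/
def ColSuff {n : ℕ} (M : Matrix (Fin n) (Fin n) ℝ) : Prop :=
  ∀ z : Fin n → ℝ, (∀ i, z i * M.mulVec z i ≤ 0) → ∀ i, z i * M.mulVec z i = 0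

theorem stmt_0 {n : ℕ} (M : Matrix (Fin n) (Fin n) ℝ) (hM : ColSuff M)
    (q z₁ w₁ z₂ w₂ : Fin n → ℝ)
    (h₁ : w₁ - M.mulVec z₁ = q) (hz₁ : ∀ i, 0 ≤ z₁ i) (hw₁ : ∀ i, 0 ≤ w₁ i)
    (hc₁ : w₁ ⬝ᵥ z₁ = 0)
    (h₂ : w₂ - M.mulVec z₂ = q) (hz₂ : ∀ i, 0 ≤ z₂ i) (hw₂ : ∀ i, 0 ≤ w₂ i)
    (hc₂ : w₂ ⬝ᵥ z₂ = 0) :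
    z₁ ⬝ᵥ w₂ = 0 ∧ z₂ ⬝ᵥ w₁ = 0 := by
  -- componentwise complementarity
  have comp : ∀ (w z : Fin n → ℝ), (∀ i, 0 ≤ z i) → (∀ i, 0 ≤ w i) →
      w ⬝ᵥ z = 0 → ∀ i, w i * z i = 0 := by
    intro w z hz hw hc i
    have hsum : ∑ j, w j * z j = 0 := hc
    have hnn : ∀ j ∈ Finset.univ, 0 ≤ w j * z j := fun j _ => mul_nonneg (hw j) (hz j)
    exact (Finset.sum_eq_zero_iff_of_nonneg hnn).mp hsum i (Finset.mem_univ i)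
  have hcc₁ := comp w₁ z₁ hz₁ hw₁ hc₁
  have hcc₂ := comp w₂ z₂ hz₂ hw₂ hc₂
  set z := z₁ - z₂ with hzdef
  have hMz : M.mulVec z = w₁ - w₂ := by
    have : M.mulVec z₁ - M.mulVec z₂ = w₁ - w₂ := by
      have e1 : M.mulVec z₁ = w₁ - q := by rw [← h₁]; abel
      have e2 : M.mulVec z₂ = w₂ - q := by rw [← h₂]; abel
      rw [e1, e2]; abel
    rw [hzdef, mulVec_sub, this]
  have key : ∀ i, z i * M.mulVec z i = -(z₁ i * w₂ i + z₂ i * w₁ i) := by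
    intro i
    have h1 : w₁ i * z₁ i = 0 := hcc₁ i
    have h2 : w₂ i * z₂ i = 0 := hcc₂ i
    have := congrFun hMz i
    rw [this]
    simp only [Pi.sub_apply, hzdef]
    nlinarith [h1, h2]
  have hle : ∀ i, z i * M.mulVec z i ≤ 0 := by
    intro i
    rw [key i]
    have : 0 ≤ z₁ i * w₂ i + z₂ i * w₁ i :=
      add_nonneg (mul_nonneg (hz₁ i) (hw₂ i)) (mul_nonneg (hz₂ i) (hw₁ i))
    linarith
  have heq := hM z hle
  have hterm : ∀ i, z₁ i * w₂ i = 0 ∧ z₂ i * w₁ i = 0 := by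
    intro i
    have h0 : z₁ i * w₂ i + z₂ i * w₁ i = 0 := by
      have := heq i; rw [key i] at this; linarith
    have a := mul_nonneg (hz₁ i) (hw₂ i)
    have b := mul_nonneg (hz₂ i) (hw₁ i)
    constructor <;> linarith
  constructor
  · exact Finset.sum_eq_zero fun i _ => (hterm i).1
  · calc z₂ ⬝ᵥ w₁ = ∑ i, z₂ i * w₁ i := rfl
      _ = 0 := Finset.sum_eq_zero fun i _ => (hterm i).2
end

section
/- Every positive semidefinite matrix is sufficient, i.e., both column sufficient and row sufficient. -/
open Matrix

lemma psd_colSuff {n : ℕ} (M : Matrix (Fin n) (Fin n) ℝ)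
    (hpsd : ∀ x : Fin n → ℝ, 0 ≤ x ⬝ᵥ M.mulVec x) : ColSuff M := by
  intro z hz i
  have hsum : ∑ j, z j * M.mulVec z j = 0 := by
    have h1 : ∑ j, z j * M.mulVec z j ≤ 0 :=
      Finset.sum_nonpos fun j _ => hz j
    have h2 : 0 ≤ ∑ j, z j * M.mulVec z j := hpsd z
    linarith
  have := (Finset.sum_eq_zero_iff_of_nonpos (fun j _ => hz j)).mp hsum
  exact this i (Finset.mem_univ i)

theorem stmt_1 {n : ℕ} (M : Matrix (Fin n) (Fin n) ℝ)
    (hpsd : ∀ x : Fin n → ℝ, 0 ≤ x ⬝ᵥ M.mulVec x) :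
    ColSuff M ∧ ColSuff Mᵀ := by
  refine ⟨psd_colSuff M hpsd, psd_colSuff Mᵀ ?_⟩
  intro x
  have : x ⬝ᵥ Mᵀ.mulVec x = x ⬝ᵥ M.mulVec x := by
    rw [mulVec_transpose, dotProduct_comm, ← dotProduct_mulVec]
  rw [this]
  exact hpsd x
end

section
/- An n×n matrix M is a P-matrix (all principal minors strictly positive) if and only if for every nonzero z ∈ ℝⁿ there exists an index k with z_k(Mz)_k > 0. -/
/-!
Multilinearity of the determinant in the rows gives
`det (A + diagonal d) = ∑ s, (∏ i ∉ s, d i) * det A[s, s]`, so a P-matrix stays nonsingular after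
adding a nonnegative diagonal. If some `z ≠ 0` had `z k * (M z) k ≤ 0` for all `k`, then on the
support `s` of `z` the choice `d k = -(M z) k / z k ≥ 0` would give `(M[s, s] + diagonal d) z = 0`.

Conversely, the sign condition passes to principal submatrices (extend vectors by zero) and to every
`(1 - t) • 1 + t • A` with `t ∈ [0, 1]`, so `t ↦ det ((1 - t) • 1 + t • A)` never vanishes on
`[0, 1]`; it is `1` at `t = 0`, hence positive at `t = 1`.
-/

open Matrix

/-- `M` is a P-matrix: all principal minors are strictly positive. -/
def IsPMatrix {n : ℕ} (M : Matrix (Fin n) (Fin n) ℝ) : Prop :=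
  ∀ α : Finset (Fin n),
    0 < (M.submatrix (fun i : α => (i : Fin n)) (fun i : α => (i : Fin n))).det

namespace Matrix

variable {ι κ R : Type*}

theorem det_add_diagonal [Fintype ι] [DecidableEq ι] [CommRing R] (A : Matrix ι ι R)
    (d : ι → R) :
    (A + diagonal d).det =
      ∑ s : Finset ι, (∏ i ∈ sᶜ, d i) * (A.submatrix ((↑) : s → ι) (↑)).det := by
  change detRowAlternating (A.row + (diagonal d).row) = _
  rw [AlternatingMap.map_add_univ]
  refine Finset.sum_congr rfl fun s _ => ?_
  have hrows : s.piecewise A.row (diagonal d).row =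
      fun i => (if i ∈ sᶜ then d i else 1) • s.piecewise A.row (1 : Matrix ι ι R).row i := by
    funext i j
    by_cases hi : i ∈ s <;> simp [hi, Finset.piecewise, diagonal_apply, one_apply]
  rw [hrows, AlternatingMap.map_smul_univ, ← det_piecewise_one_eq_submatrix_det, smul_eq_mul,
    Finset.prod_ite_mem, Finset.univ_inter]
  rfl

theorem det_submatrix_submatrix_coe [DecidableEq ι] [DecidableEq κ] [CommRing R]
    (A : Matrix ι ι R) (e : κ ↪ ι) (t : Finset κ) :
    ((A.submatrix e e).submatrix ((↑) : t → κ) (↑)).det =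
      (A.submatrix ((↑) : t.map e → ι) (↑)).det := by
  rw [← det_submatrix_equiv_self (t.equivMap e)]
  rfl

theorem submatrix_coe_mulVec_coe [Fintype ι] [NonUnitalNonAssocSemiring R] (A : Matrix ι ι R)
    (s : Finset ι) {z : ι → R} (hz : ∀ j ∉ s, z j = 0) :
    (A.submatrix (↑) (↑) : Matrix s s R) *ᵥ (fun i => z i) = fun i : s => (A *ᵥ z) i := by
  funext i
  simp only [mulVec, dotProduct, submatrix_apply]
  rw [Finset.sum_coe_sort s (fun j => A i j * z j)]
  exact Finset.sum_subset (Finset.subset_univ s) fun j _ hj => by simp [hz j hj]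

section Real

variable [Fintype ι] [DecidableEq ι]

theorem det_add_diagonal_pos {A : Matrix ι ι ℝ}
    (hA : ∀ s : Finset ι, 0 < (A.submatrix ((↑) : s → ι) (↑)).det) {d : ι → ℝ} (hd : 0 ≤ d) :
    0 < (A + diagonal d).det := by
  rw [det_add_diagonal]
  refine Finset.sum_pos' (fun s _ => mul_nonneg (Finset.prod_nonneg fun i _ => hd i) (hA s).le)
    ⟨Finset.univ, Finset.mem_univ _, ?_⟩
  simpa using hA Finset.univ

theorem exists_nonneg_diagonal_add_mulVec_eq_zero {A : Matrix ι ι ℝ} {x : ι → ℝ}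
    (hx : ∀ i, x i ≠ 0) (hAx : ∀ i, x i * (A *ᵥ x) i ≤ 0) :
    ∃ d, 0 ≤ d ∧ (A + diagonal d) *ᵥ x = 0 := by
  refine ⟨fun i => -(A *ᵥ x) i / x i, fun i => ?_, funext fun i => ?_⟩
  · have : -(A *ᵥ x) i / x i = -(x i * (A *ᵥ x) i) / x i ^ 2 := by
      field_simp [hx i]
    simpa [this] using div_nonneg (neg_nonneg.mpr (hAx i)) (sq_nonneg (x i))
  · simp [add_mulVec, mulVec_diagonal, hx i]

/-- In Fiedler–Pták's terms, `A` reverses the sign of no nonzero vector. -/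
def SignNonreversing (A : Matrix ι ι ℝ) : Prop :=
  ∀ v : ι → ℝ, v ≠ 0 → ∃ k, 0 < v k * (A *ᵥ v) k

namespace SignNonreversing

variable {A : Matrix ι ι ℝ}

theorem det_ne_zero (hA : A.SignNonreversing) : A.det ≠ 0 := by
  intro h
  obtain ⟨v, hv, hAv⟩ := exists_mulVec_eq_zero_iff.mpr h
  obtain ⟨k, hk⟩ := hA v hv
  simp [hAv] at hk

theorem one_sub_smul_one_add_smul (hA : A.SignNonreversing) {t : ℝ} (ht : t ∈ Set.Icc (0 : ℝ) 1) :
    ((1 - t) • (1 : Matrix ι ι ℝ) + t • A).SignNonreversing := by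
  intro v hv
  obtain ⟨k, hk⟩ := hA v hv
  have hvk : 0 < v k ^ 2 := by
    rcases eq_or_ne (v k) 0 with h | h
    · simp [h] at hk
    · positivity
  have hpos : 0 < (1 - t) * v k ^ 2 + t * (v k * (A *ᵥ v) k) := by
    rcases ht.1.eq_or_lt with rfl | ht0
    · simpa using hvk
    · exact add_pos_of_nonneg_of_pos (mul_nonneg (sub_nonneg.2 ht.2) hvk.le) (mul_pos ht0 hk)
  refine ⟨k, ?_⟩
  simp only [add_mulVec, smul_mulVec, one_mulVec, Pi.add_apply, Pi.smul_apply, smul_eq_mul]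
  linear_combination hpos

theorem det_pos (hA : A.SignNonreversing) : 0 < A.det := by
  set f : ℝ → ℝ := fun t => ((1 - t) • (1 : Matrix ι ι ℝ) + t • A).det
  have hf : Continuous f := by fun_prop
  have hf0 : f 0 = 1 := by simp [f]
  have hf1 : f 1 = A.det := by simp [f]
  by_contra! hneg
  obtain ⟨t, ht, hft⟩ := intermediate_value_Icc' zero_le_one hf.continuousOn
    ⟨hf1 ▸ hneg, hf0 ▸ zero_le_one⟩
  exact (hA.one_sub_smul_one_add_smul ht).det_ne_zero hft

theorem submatrix_coe (hA : A.SignNonreversing) (s : Finset ι) :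
    (A.submatrix ((↑) : s → ι) (↑)).SignNonreversing := by
  intro v hv
  set z : ι → ℝ := Function.extend (↑) v 0
  have hzv : (fun i : s => z i) = v := funext (Subtype.val_injective.extend_apply v 0)
  have hz : ∀ j ∉ s, z j = 0 := fun j hj =>
    Function.extend_apply' _ _ _ fun ⟨i, hi⟩ => hj (hi ▸ i.2)
  obtain ⟨k, hk⟩ := hA z fun h => hv (by simp [← hzv, h]; rfl)
  have hks : k ∈ s := by
    by_contra hks
    simp [hz k hks] at hk
  refine ⟨⟨k, hks⟩, ?_⟩
  rw [← hzv, submatrix_coe_mulVec_coe A s hz]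
  exact hk

end SignNonreversing

theorem signNonreversing_of_det_submatrix_pos {A : Matrix ι ι ℝ}
    (hA : ∀ s : Finset ι, 0 < (A.submatrix ((↑) : s → ι) (↑)).det) : A.SignNonreversing := by
  intro z hz
  by_contra! hAz
  set s := Finset.univ.filter fun i => z i ≠ 0
  have hzs : ∀ j ∉ s, z j = 0 := fun j hj => by simpa [s] using hj
  have hAsz := submatrix_coe_mulVec_coe A s hzs
  obtain ⟨d, hd, hdz⟩ := exists_nonneg_diagonal_add_mulVec_eq_zero (A := A.submatrix (↑) (↑))
    (fun i : s => (Finset.mem_filter.mp i.2).2) (fun i => by simpa only [hAsz] using hAz i)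
  have hz_s : (fun i : s => z i) ≠ 0 := by
    obtain ⟨j, hj⟩ := Function.ne_iff.mp hz
    exact Function.ne_iff.mpr ⟨⟨j, Finset.mem_filter.mpr ⟨Finset.mem_univ j, hj⟩⟩, hj⟩
  have hAs : ∀ t : Finset s,
      0 < ((A.submatrix (↑) (↑) : Matrix s s ℝ).submatrix (↑) (↑) : Matrix t t ℝ).det :=
    fun t => (hA _).trans_eq (det_submatrix_submatrix_coe A (.subtype _) t).symm
  exact (det_add_diagonal_pos hAs hd).ne' (exists_mulVec_eq_zero_iff.mp ⟨_, hz_s, hdz⟩)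

end Real

end Matrix

theorem stmt_3 {n : ℕ} (M : Matrix (Fin n) (Fin n) ℝ) :
    IsPMatrix M ↔ ∀ z : Fin n → ℝ, z ≠ 0 → ∃ k, 0 < z k * M.mulVec z k :=
  ⟨signNonreversing_of_det_submatrix_pos, fun h α => (SignNonreversing.submatrix_coe h α).det_pos⟩
end

section
/- Let M be a sufficient n×n matrix, A = [I, −M] ∈ ℝ^{n×2n}, and let B₁, B₂ be complementary bases whose complementary cones 𝒞(B₁) and 𝒞(B₂) satisfy dim(𝒞(B₁) ∩ 𝒞(B₂)) = n−1. Then |B₁ ∩ B₂| ≥ n−2. -/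
open Matrix

/-- `M` is sufficient: both `M` and `Mᵀ` are column sufficient. -/
def Suff {n : ℕ} (M : Matrix (Fin n) (Fin n) ℝ) : Prop := ColSuff M ∧ ColSuff Mᵀ

/-- The matrix `A = [I, -M]`, with columns indexed by `Fin n ⊕ Fin n`. -/
def Amat {n : ℕ} (M : Matrix (Fin n) (Fin n) ℝ) : Matrix (Fin n) (Fin n ⊕ Fin n) ℝ :=
  Matrix.fromCols 1 (-M)

/-- The complementary index. -/
def bar {n : ℕ} : Fin n ⊕ Fin n → Fin n ⊕ Fin n
  | .inl i => .inr i
  | .inr i => .inl i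

/-- `B` is a basis of `A = [I, -M]`: `n` linearly independent columns. -/
def IsBasis {n : ℕ} (M : Matrix (Fin n) (Fin n) ℝ) (B : Finset (Fin n ⊕ Fin n)) : Prop :=
  B.card = n ∧ LinearIndependent ℝ (fun j : B => (Amat M)ᵀ (j : Fin n ⊕ Fin n))

/-- A complementary basis: a basis containing exactly one of each complementary pair. -/
def IsComplBasis {n : ℕ} (M : Matrix (Fin n) (Fin n) ℝ) (B : Finset (Fin n ⊕ Fin n)) : Prop :=
  IsBasis M B ∧ ∀ i : Fin n, Xor' (Sum.inl i ∈ B) (Sum.inr i ∈ B)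

/-- The complementary cone `𝒞(J)`: nonnegative combinations of the columns of `A` indexed by `J`. -/
def coneOf {n : ℕ} (M : Matrix (Fin n) (Fin n) ℝ) (J : Finset (Fin n ⊕ Fin n)) :
    Set (Fin n → ℝ) :=
  {y | ∃ c : Fin n ⊕ Fin n → ℝ, (∀ j, 0 ≤ c j) ∧ (∀ j ∉ J, c j = 0) ∧ y = (Amat M).mulVec c}

/-! If `y = A c₁ = A c₂` with `c₁, c₂ ≥ 0` supported on the complementary bases `B₁, B₂`, then
column sufficiency, applied to `z = c₁ ∘ inr - c₂ ∘ inr`, forces `c₁ⱼ c₂_{bar j} = 0`. Hence, with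
`D = B₁ \ B₂` and `T = {j ∈ D | c₁ⱼ = 0}`, the point `y` lies both in the span of the columns
`B₁ \ T` and in the span of the columns `B₂ \ bar (D \ T)`. So the convex cone `𝒞(B₁) ∩ 𝒞(B₂)`
is covered by finitely many subspaces and therefore lies in a single one of them. As its span has
dimension `n - 1`, this gives `|T| ≤ 1` and `|D \ T| ≤ 1`, so `|B₁ \ B₂| ≤ 2`. -/

theorem Submodule.mem_of_add_smul_mem_of_add_smul_mem {K V : Type*} [Field K] [AddCommGroup V]
    [Module K V] (W : Submodule K V) {x v : V} {a b : K} (hab : a ≠ b)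
    (ha : x + a • v ∈ W) (hb : x + b • v ∈ W) : v ∈ W ∧ x ∈ W := by
  have hv : v ∈ W := by
    have hsub : (a - b) • v ∈ W := by
      convert W.sub_mem ha hb using 1
      module
    exact (W.smul_mem_iff (sub_ne_zero.2 hab)).1 hsub
  refine ⟨hv, ?_⟩
  convert W.sub_mem ha (W.smul_mem a hv) using 1
  abel

theorem ConvexCone.exists_subset_of_subset_biUnion {𝕜 V ι : Type*} [Field 𝕜] [LinearOrder 𝕜]
    [IsStrictOrderedRing 𝕜] [AddCommGroup V] [Module 𝕜 V] (C : ConvexCone 𝕜 V)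
    (W : ι → Submodule 𝕜 V) {S : Finset ι} (hS : S.Nonempty)
    (hC : (C : Set V) ⊆ ⋃ i ∈ S, (W i : Set V)) : ∃ i ∈ S, (C : Set V) ⊆ W i := by
  induction hS using Finset.Nonempty.cons_induction with
  | singleton a => exact ⟨a, Finset.mem_singleton_self a, by simpa using hC⟩
  | cons a S haS hS ih =>
    by_cases hCS : (C : Set V) ⊆ ⋃ i ∈ S, (W i : Set V)
    · obtain ⟨i, hi, hCi⟩ := ih hCS
      exact ⟨i, Finset.mem_cons_of_mem hi, hCi⟩
    obtain ⟨x₀, hx₀C, hx₀S⟩ := Set.not_subset.1 hCS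
    simp only [Set.mem_iUnion, SetLike.mem_coe, not_exists] at hx₀S
    refine ⟨a, Finset.mem_cons_self a S, fun x hx => ?_⟩
    -- Among the points `x + (m + 1) • x₀ ∈ C`, two lie in the same `W i`; then `x₀, x ∈ W i`,
    -- and `x₀ ∈ W i` forces `i = a`.
    have hray : ∀ m : ℕ, ∃ i : Finset.cons a S haS, x + ((m : 𝕜) + 1) • x₀ ∈ W i := fun m => by
      have := hC (C.add_mem hx (C.smul_mem (Nat.cast_add_one_pos m) hx₀C))
      simp only [Set.mem_iUnion, SetLike.mem_coe] at this
      obtain ⟨i, hi, hmem⟩ := this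
      exact ⟨⟨i, hi⟩, hmem⟩
    choose g hg using hray
    obtain ⟨m₁, m₂, hne, hgm⟩ := Finite.exists_ne_map_eq_of_infinite g
    have hm : (m₁ : 𝕜) + 1 ≠ m₂ + 1 := by norm_cast; omega
    obtain ⟨hx₀, hxW⟩ :=
      (W (g m₁)).mem_of_add_smul_mem_of_add_smul_mem hm (hg m₁) (hgm ▸ hg m₂)
    rcases Finset.mem_cons.1 (g m₁).2 with hga | hgS
    · exact hga ▸ hxW
    · exact absurd hx₀ (hx₀S _ hgS)

theorem vectorSpan_le_of_subset {k V : Type*} [Ring k] [AddCommGroup V] [Module k V]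
    {s : Set V} {W : Submodule k V} (h : s ⊆ W) : vectorSpan k s ≤ W := by
  rw [vectorSpan_def, Submodule.span_le]
  rintro _ ⟨a, ha, b, hb, rfl⟩
  exact W.sub_mem (h ha) (h hb)

section ColSpan

variable {R m ι : Type*} [CommRing R] (A : Matrix m ι R)

def Matrix.colSpan (J : Finset ι) : Submodule R (m → R) :=
  Submodule.span R (Set.range fun j : J => Aᵀ j)

theorem Matrix.mulVec_mem_colSpan [Fintype ι] {J : Finset ι} {c : ι → R} (hc : ∀ j ∉ J, c j = 0) :
    A *ᵥ c ∈ A.colSpan J := by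
  have hsum : A *ᵥ c = ∑ j ∈ J, c j • Aᵀ j := by
    ext i
    rw [Finset.sum_apply, Matrix.mulVec, dotProduct,
      ← Finset.sum_subset J.subset_univ fun j _ hj => by rw [hc j hj, mul_zero]]
    simp only [Pi.smul_apply, smul_eq_mul, Matrix.transpose_apply, mul_comm]
  rw [hsum]
  exact Submodule.sum_mem _ fun j hj =>
    Submodule.smul_mem _ _ (Submodule.subset_span ⟨⟨j, hj⟩, rfl⟩)

theorem Matrix.finrank_colSpan_le [StrongRankCondition R] (J : Finset ι) :
    Module.finrank R (A.colSpan J) ≤ J.card :=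
  (finrank_range_le_card _).trans_eq (Fintype.card_coe J)

end ColSpan

variable {n : ℕ}

theorem bar_bar (j : Fin n ⊕ Fin n) : bar (bar j) = j := by cases j <;> rfl

theorem bar_injective : Function.Injective (bar (n := n)) :=
  Function.LeftInverse.injective bar_bar

theorem bar_mem_of_not_mem {B : Finset (Fin n ⊕ Fin n)}
    (hB : ∀ i : Fin n, Xor' (Sum.inl i ∈ B) (Sum.inr i ∈ B)) {j : Fin n ⊕ Fin n} (hj : j ∉ B) :
    bar j ∈ B := by
  cases j with
  | inl i => exact (hB i).elim (fun h => absurd h.1 hj) And.left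
  | inr i => exact (hB i).elim And.left (fun h => absurd h.1 hj)

theorem mul_eq_zero_of_support_subset {B : Finset (Fin n ⊕ Fin n)}
    (hB : ∀ i : Fin n, Xor' (Sum.inl i ∈ B) (Sum.inr i ∈ B)) {c : Fin n ⊕ Fin n → ℝ}
    (hc : ∀ j ∉ B, c j = 0) (i : Fin n) : c (Sum.inl i) * c (Sum.inr i) = 0 := by
  rcases hB i with ⟨-, hr⟩ | ⟨-, hl⟩
  · rw [hc _ hr, mul_zero]
  · rw [hc _ hl, zero_mul]

theorem Amat_mulVec (M : Matrix (Fin n) (Fin n) ℝ) (c : Fin n ⊕ Fin n → ℝ) :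
    Amat M *ᵥ c = c ∘ Sum.inl - M *ᵥ (c ∘ Sum.inr) := by
  have h := Matrix.fromCols_mulVec_sumElim (1 : Matrix (Fin n) (Fin n) ℝ) (-M)
    (c ∘ Sum.inl) (c ∘ Sum.inr)
  rwa [Sum.elim_comp_inl_inr, Matrix.one_mulVec, Matrix.neg_mulVec, ← sub_eq_add_neg] at h

theorem ColSuff.mul_bar_eq_zero {M : Matrix (Fin n) (Fin n) ℝ} (hM : ColSuff M)
    {c₁ c₂ : Fin n ⊕ Fin n → ℝ} (hc₁ : ∀ j, 0 ≤ c₁ j) (hc₂ : ∀ j, 0 ≤ c₂ j)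
    (hcompl₁ : ∀ i, c₁ (Sum.inl i) * c₁ (Sum.inr i) = 0)
    (hcompl₂ : ∀ i, c₂ (Sum.inl i) * c₂ (Sum.inr i) = 0)
    (h : Amat M *ᵥ c₁ = Amat M *ᵥ c₂) (j : Fin n ⊕ Fin n) : c₁ j * c₂ (bar j) = 0 := by
  set z : Fin n → ℝ := c₁ ∘ Sum.inr - c₂ ∘ Sum.inr with hz
  have hMz : ∀ i, (M *ᵥ z) i = c₁ (Sum.inl i) - c₂ (Sum.inl i) := fun i => by
    have hi := congrFun h i
    simp only [Amat_mulVec, Pi.sub_apply, Function.comp_apply] at hi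
    rw [hz, Matrix.mulVec_sub, Pi.sub_apply]
    linarith
  -- The complementarity of `c₁` and of `c₂` leaves only the cross terms in `zᵢ (M z)ᵢ`.
  have hzMz : ∀ i, z i * (M *ᵥ z) i =
      -(c₁ (Sum.inr i) * c₂ (Sum.inl i) + c₂ (Sum.inr i) * c₁ (Sum.inl i)) := fun i => by
    rw [hMz, hz, Pi.sub_apply, Function.comp_apply, Function.comp_apply]
    linear_combination hcompl₁ i + hcompl₂ i
  have hcross : ∀ i, 0 ≤ c₁ (Sum.inr i) * c₂ (Sum.inl i) + c₂ (Sum.inr i) * c₁ (Sum.inl i) :=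
    fun i => add_nonneg (mul_nonneg (hc₁ _) (hc₂ _)) (mul_nonneg (hc₂ _) (hc₁ _))
  have hzero := hM z fun i => by rw [hzMz]; exact neg_nonpos.2 (hcross i)
  have hboth := fun i => (add_eq_zero_iff_of_nonneg (mul_nonneg (hc₁ (Sum.inr i)) (hc₂ _))
    (mul_nonneg (hc₂ (Sum.inr i)) (hc₁ _))).1 (neg_eq_zero.1 ((hzMz i).symm.trans (hzero i)))
  cases j with
  | inl i => rw [mul_comm]; exact (hboth i).2
  | inr i => exact (hboth i).1

def convexConeOf (M : Matrix (Fin n) (Fin n) ℝ) (J : Finset (Fin n ⊕ Fin n)) :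
    ConvexCone ℝ (Fin n → ℝ) where
  carrier := coneOf M J
  smul_mem' := by
    rintro t ht _ ⟨c, hc, hcJ, rfl⟩
    exact ⟨t • c, fun j => mul_nonneg ht.le (hc j), fun j hj => by simp [hcJ j hj],
      (Matrix.mulVec_smul _ _ _).symm⟩
  add_mem' := by
    rintro _ ⟨c, hc, hcJ, rfl⟩ _ ⟨d, hd, hdJ, rfl⟩
    exact ⟨c + d, fun j => add_nonneg (hc j) (hd j), fun j hj => by simp [hcJ j hj, hdJ j hj],
      (Matrix.mulVec_add _ _ _).symm⟩

theorem coneOf_inter_subset_biUnion {M : Matrix (Fin n) (Fin n) ℝ} (hM : ColSuff M)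
    {B₁ B₂ : Finset (Fin n ⊕ Fin n)}
    (h₁ : ∀ i : Fin n, Xor' (Sum.inl i ∈ B₁) (Sum.inr i ∈ B₁))
    (h₂ : ∀ i : Fin n, Xor' (Sum.inl i ∈ B₂) (Sum.inr i ∈ B₂)) :
    coneOf M B₁ ∩ coneOf M B₂ ⊆ ⋃ T ∈ (B₁ \ B₂).powerset,
      (((Amat M).colSpan (B₁ \ T) ⊓ (Amat M).colSpan (B₂ \ ((B₁ \ B₂) \ T).image bar) :
        Submodule ℝ (Fin n → ℝ)) : Set (Fin n → ℝ)) := by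
  rintro _ ⟨⟨c₁, hc₁, hs₁, rfl⟩, c₂, hc₂, hs₂, hc⟩
  have horth := hM.mul_bar_eq_zero hc₁ hc₂ (mul_eq_zero_of_support_subset h₁ hs₁)
    (mul_eq_zero_of_support_subset h₂ hs₂) hc
  set T := (B₁ \ B₂).filter (c₁ · = 0)
  simp only [Set.mem_iUnion, Finset.mem_powerset, SetLike.mem_coe, Submodule.mem_inf]
  refine ⟨T, Finset.filter_subset _ _, (Amat M).mulVec_mem_colSpan fun j hj => ?_,
    hc ▸ (Amat M).mulVec_mem_colSpan fun j hj => ?_⟩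
  · by_cases hjB : j ∈ B₁
    · by_contra hne
      exact hj (Finset.mem_sdiff.2 ⟨hjB, fun hjT => hne (Finset.mem_filter.1 hjT).2⟩)
    · exact hs₁ j hjB
  · by_cases hjB : j ∈ B₂
    · have hjbar : j ∈ ((B₁ \ B₂) \ T).image bar := by
        by_contra hjbar
        exact hj (Finset.mem_sdiff.2 ⟨hjB, hjbar⟩)
      obtain ⟨j₀, hj₀, rfl⟩ := Finset.mem_image.1 hjbar
      obtain ⟨hj₀D, hj₀T⟩ := Finset.mem_sdiff.1 hj₀
      have hne : c₁ j₀ ≠ 0 := fun h0 => hj₀T (Finset.mem_filter.2 ⟨hj₀D, h0⟩)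
      exact (mul_eq_zero.1 (horth j₀)).resolve_left hne
    · exact hs₂ j hjB

theorem card_sdiff_le_two {B₁ B₂ T : Finset (Fin n ⊕ Fin n)} (hB₁ : B₁.card = n)
    (hB₂ : B₂.card = n) (h₂ : ∀ i : Fin n, Xor' (Sum.inl i ∈ B₂) (Sum.inr i ∈ B₂))
    (hT : T ⊆ B₁ \ B₂) (hT₁ : n - 1 ≤ (B₁ \ T).card)
    (hT₂ : n - 1 ≤ (B₂ \ ((B₁ \ B₂) \ T).image bar).card) : (B₁ \ B₂).card ≤ 2 := by
  have hbar : ((B₁ \ B₂) \ T).image bar ⊆ B₂ := by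
    intro j hj
    obtain ⟨j₀, hj₀, rfl⟩ := Finset.mem_image.1 hj
    exact bar_mem_of_not_mem h₂ (Finset.mem_sdiff.1 (Finset.mem_sdiff.1 hj₀).1).2
  rw [Finset.card_sdiff_of_subset (hT.trans Finset.sdiff_subset), hB₁] at hT₁
  rw [Finset.card_sdiff_of_subset hbar, hB₂, Finset.card_image_of_injective _ bar_injective,
    Finset.card_sdiff_of_subset hT] at hT₂
  have hTD := Finset.card_le_card hT
  have hD := Finset.card_le_card (Finset.sdiff_subset : B₁ \ B₂ ⊆ B₁)
  omega

theorem stmt_5 {n : ℕ} (M : Matrix (Fin n) (Fin n) ℝ) (hM : Suff M)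
    (B₁ B₂ : Finset (Fin n ⊕ Fin n))
    (hB₁ : IsComplBasis M B₁) (hB₂ : IsComplBasis M B₂)
    (hadj : Module.finrank ℝ (vectorSpan ℝ (coneOf M B₁ ∩ coneOf M B₂)) = n - 1) :
    n - 2 ≤ (B₁ ∩ B₂).card := by
  obtain ⟨⟨hcard₁, -⟩, hxor₁⟩ := hB₁
  obtain ⟨⟨hcard₂, -⟩, hxor₂⟩ := hB₂
  obtain ⟨T, hT, hFT⟩ := (convexConeOf M B₁ ⊓ convexConeOf M B₂).exists_subset_of_subset_biUnion
    _ ⟨∅, Finset.empty_mem_powerset _⟩ (coneOf_inter_subset_biUnion hM.1 hxor₁ hxor₂)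
  have hspan := vectorSpan_le_of_subset (k := ℝ) hFT
  have hrank : ∀ J, vectorSpan ℝ (coneOf M B₁ ∩ coneOf M B₂) ≤ (Amat M).colSpan J →
      n - 1 ≤ J.card := fun J hJ =>
    hadj ▸ (Submodule.finrank_mono hJ).trans ((Amat M).finrank_colSpan_le J)
  have hD := card_sdiff_le_two hcard₁ hcard₂ hxor₂ (Finset.mem_powerset.1 hT)
    (hrank _ (hspan.trans inf_le_left)) (hrank _ (hspan.trans inf_le_right))
  have := Finset.card_sdiff_add_card_inter B₁ B₂
  omega
end

section
/- An n×n matrix M is a Q₀-matrix (every weakly feasible LCP(M,q) is solvable) if and only if the complementary range K(M) is convex, if and only if K(M) = cone([I, −M]). -/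
open Matrix

/-- The complementary range: right hand sides for which the LCP is solvable. -/
def Krange {n : ℕ} (M : Matrix (Fin n) (Fin n) ℝ) : Set (Fin n → ℝ) :=
  {q | ∃ w z : Fin n → ℝ, (∀ i, 0 ≤ w i) ∧ (∀ i, 0 ≤ z i) ∧
    w - M.mulVec z = q ∧ w ⬝ᵥ z = 0}

/-- The cone generated by the columns of `[I, -M]`. -/
def coneAll {n : ℕ} (M : Matrix (Fin n) (Fin n) ℝ) : Set (Fin n → ℝ) :=
  {y | ∃ c : Fin n ⊕ Fin n → ℝ, (∀ j, 0 ≤ c j) ∧ y = (Amat M).mulVec c}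

/-- `M` is a Q₀-matrix: every weakly feasible LCP(M,q) is solvable. -/
def IsQ0 {n : ℕ} (M : Matrix (Fin n) (Fin n) ℝ) : Prop :=
  ∀ q : Fin n → ℝ,
    (∃ w z : Fin n → ℝ, (∀ i, 0 ≤ w i) ∧ (∀ i, 0 ≤ z i) ∧ w - M.mulVec z = q) →
    q ∈ Krange M
/-!
`K(M)` is always contained in `cone([I, -M])`, the set of weakly feasible right-hand sides, and
`M` is `Q₀` exactly when the two coincide. Since `cone([I, -M])` is convex, it remains to see that a
convex `K(M)` contains it: `K(M)` is closed under nonnegative scaling and contains every column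
of `[I, -M]`, so convexity makes it closed under addition and hence under nonnegative
combinations of the columns.
-/

section

variable {n : ℕ} (M : Matrix (Fin n) (Fin n) ℝ)

lemma Amat_mulVec_sumElim (w z : Fin n → ℝ) : Amat M *ᵥ Sum.elim w z = w - M *ᵥ z := by
  rw [Amat, fromCols_mulVec_sumElim, one_mulVec, neg_mulVec, sub_eq_add_neg]

lemma mem_coneAll_iff {q : Fin n → ℝ} :
    q ∈ coneAll M ↔
      ∃ w z : Fin n → ℝ, (∀ i, 0 ≤ w i) ∧ (∀ i, 0 ≤ z i) ∧ w - M *ᵥ z = q := by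
  constructor
  · rintro ⟨c, hc, rfl⟩
    refine ⟨c ∘ Sum.inl, c ∘ Sum.inr, fun i => hc _, fun i => hc _, ?_⟩
    rw [← Amat_mulVec_sumElim, Sum.elim_comp_inl_inr]
  · rintro ⟨w, z, hw, hz, rfl⟩
    exact ⟨Sum.elim w z, Sum.forall.2 ⟨hw, hz⟩, (Amat_mulVec_sumElim M w z).symm⟩

lemma convex_coneAll : Convex ℝ (coneAll M) := by
  rintro _ ⟨c, hc, rfl⟩ _ ⟨d, hd, rfl⟩ a b ha hb -
  refine ⟨a • c + b • d, fun j => add_nonneg (mul_nonneg ha (hc j)) (mul_nonneg hb (hd j)), ?_⟩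
  rw [mulVec_add, mulVec_smul, mulVec_smul]

lemma Krange_subset_coneAll : Krange M ⊆ coneAll M := by
  rintro q ⟨w, z, hw, hz, hq, -⟩
  exact (mem_coneAll_iff M).2 ⟨w, z, hw, hz, hq⟩

lemma isQ0_iff_coneAll_subset_Krange : IsQ0 M ↔ coneAll M ⊆ Krange M :=
  forall_congr' fun q => by rw [mem_coneAll_iff]

lemma isQ0_iff_Krange_eq_coneAll : IsQ0 M ↔ Krange M = coneAll M := by
  rw [isQ0_iff_coneAll_subset_Krange, Set.Subset.antisymm_iff]
  exact (and_iff_right (Krange_subset_coneAll M)).symm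

lemma zero_mem_Krange : (0 : Fin n → ℝ) ∈ Krange M :=
  ⟨0, 0, fun _ => le_rfl, fun _ => le_rfl, by simp, by simp⟩

lemma smul_mem_Krange {t : ℝ} (ht : 0 ≤ t) {q : Fin n → ℝ} (hq : q ∈ Krange M) :
    t • q ∈ Krange M := by
  obtain ⟨w, z, hw, hz, rfl, hwz⟩ := hq
  refine ⟨t • w, t • z, fun i => mul_nonneg ht (hw i), fun i => mul_nonneg ht (hz i), ?_, ?_⟩
  · rw [mulVec_smul, smul_sub]
  · rw [smul_dotProduct, dotProduct_smul, hwz, smul_zero, smul_zero]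

lemma add_mem_Krange_of_convex (hK : Convex ℝ (Krange M)) {x y : Fin n → ℝ}
    (hx : x ∈ Krange M) (hy : y ∈ Krange M) : x + y ∈ Krange M := by
  have hmid : (1 / 2 : ℝ) • x + (1 / 2 : ℝ) • y ∈ Krange M :=
    hK hx hy (by norm_num) (by norm_num) (by norm_num)
  convert smul_mem_Krange M zero_le_two hmid using 1
  module

/-- Every point of a complementary cone lies in `K(M)`. -/
lemma Amat_mulVec_mem_Krange {c : Fin n ⊕ Fin n → ℝ} (hc : ∀ j, 0 ≤ c j)
    (hcompl : ∀ i, c (Sum.inl i) * c (Sum.inr i) = 0) : Amat M *ᵥ c ∈ Krange M := by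
  refine ⟨c ∘ Sum.inl, c ∘ Sum.inr, fun i => hc _, fun i => hc _, ?_, ?_⟩
  · rw [← Amat_mulVec_sumElim, Sum.elim_comp_inl_inr]
  · exact Finset.sum_eq_zero fun i _ => hcompl i

lemma Amat_col_mem_Krange (j : Fin n ⊕ Fin n) : Amat M *ᵥ Pi.single j 1 ∈ Krange M := by
  refine Amat_mulVec_mem_Krange M (fun k => by by_cases h : k = j <;> simp [h]) fun i => ?_
  cases j <;> simp

lemma coneAll_subset_Krange_of_convex (hK : Convex ℝ (Krange M)) : coneAll M ⊆ Krange M := by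
  rintro _ ⟨c, hc, rfl⟩
  rw [← Finset.univ_sum_single c, mulVec_sum]
  refine Finset.sum_induction _ (· ∈ Krange M) (fun _ _ => add_mem_Krange_of_convex M hK)
    (zero_mem_Krange M) fun j _ => ?_
  rw [← mul_one (c j), ← smul_eq_mul, Pi.single_smul', mulVec_smul]
  exact smul_mem_Krange M (hc j) (Amat_col_mem_Krange M j)

end

theorem stmt_10 {n : ℕ} (M : Matrix (Fin n) (Fin n) ℝ) :
    (IsQ0 M ↔ Convex ℝ (Krange M)) ∧ (IsQ0 M ↔ Krange M = coneAll M) := by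
  refine ⟨(isQ0_iff_Krange_eq_coneAll M).trans ⟨fun h => h ▸ convex_coneAll M, fun hK => ?_⟩,
    isQ0_iff_Krange_eq_coneAll M⟩
  exact (Krange_subset_coneAll M).antisymm (coneAll_subset_Krange_of_convex M hK)
end

section
/- Let M be sufficient and S = {Qθ + q : θ ∈ ℝ^d}. Set ε̂ = (ε, ε², …, εⁿ)ᵀ and S^ε = S + ε̂. Then there exists δ > 0 such that for every ε ∈ (0,δ), S^ε lies in general position with respect to the complementary cones of M: for every complementary basis B, S^ε ∩ 𝒞(B) ≠ ∅ implies S^ε ∩ int 𝒞(B) ≠ ∅. -/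
open Matrix

/-- The lexicographic perturbation vector `(ε, ε², …, εⁿ)`. -/
def epsVec {n : ℕ} (ε : ℝ) : Fin n → ℝ := fun i => ε ^ ((i : ℕ) + 1)

/-!
If the affine space `q + ε̂ + range Q` meets the complementary cone `𝒞(B)` but not its interior,
a functional `f ≠ 0` separating it from the interior vanishes on `range Q`, is `≤ 0` on `𝒞(B)`
and vanishes at a common point `x = ∑ cⱼ Aⱼ`. Hence `cⱼ = 0` whenever `f Aⱼ ≠ 0`, and
`q + ε̂` lies in the proper subspace `range Q + span {Aⱼ : j ∈ T}`, `T = {j ∈ B | f Aⱼ = 0}`.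
There are finitely many such subspaces, and the curve `ε ↦ q + ε̂` meets a proper subspace only
finitely often: a nonzero functional `g` gives the nonzero polynomial
`g q + ∑ᵢ g(eᵢ) εⁱ⁺¹`. So every small enough `ε > 0` avoids all bad values.
-/

open Polynomial

section EpsCurve

variable {n : ℕ}

noncomputable def dualCurvePoly (f : Module.Dual ℝ (Fin n → ℝ)) (q : Fin n → ℝ) : ℝ[X] :=
  C (f q) + ∑ i : Fin n, monomial ((i : ℕ) + 1) (f (Pi.single i 1))

lemma eval_dualCurvePoly (f : Module.Dual ℝ (Fin n → ℝ)) (q : Fin n → ℝ) (ε : ℝ) :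
    (dualCurvePoly f q).eval ε = f (q + epsVec ε) := by
  have hsingle (i : Fin n) : (fun j => if i = j then (1 : ℝ) else 0) = Pi.single i 1 := by
    ext j; simp [Pi.single_apply, eq_comm]
  rw [map_add, LinearMap.pi_apply_eq_sum_univ f (epsVec ε)]
  simp [dualCurvePoly, eval_finsetSum, epsVec, hsingle, mul_comm]

lemma coeff_dualCurvePoly_succ (f : Module.Dual ℝ (Fin n → ℝ)) (q : Fin n → ℝ) (i : Fin n) :
    (dualCurvePoly f q).coeff ((i : ℕ) + 1) = f (Pi.single i 1) := by
  simp [dualCurvePoly, coeff_monomial, Fin.val_inj]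

lemma dualCurvePoly_ne_zero {f : Module.Dual ℝ (Fin n → ℝ)} (hf : f ≠ 0) (q : Fin n → ℝ) :
    dualCurvePoly f q ≠ 0 := by
  obtain ⟨i, hi⟩ : ∃ i : Fin n, f (Pi.single i 1) ≠ 0 := by
    by_contra! h
    exact hf (LinearMap.pi_ext' fun i => LinearMap.ext_ring (by simpa using h i))
  intro h0
  rw [← coeff_dualCurvePoly_succ f q i, h0, coeff_zero] at hi
  exact hi rfl

theorem Submodule.finite_setOf_add_epsVec_mem {V : Submodule ℝ (Fin n → ℝ)} (hV : V ≠ ⊤)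
    (q : Fin n → ℝ) : {ε : ℝ | q + epsVec ε ∈ V}.Finite := by
  obtain ⟨f, hf, hVf⟩ := Submodule.exists_dual_map_eq_bot_of_lt_top hV.lt_top inferInstance
  refine (finite_setOfPred_isRoot (dualCurvePoly_ne_zero hf q)).subset fun ε hε => ?_
  have hfε := Submodule.mem_map_of_mem (f := f) hε
  rwa [hVf, Submodule.mem_bot, ← eval_dualCurvePoly] at hfε

end EpsCurve

lemma Set.Finite.exists_pos_disjoint_Ioo {s : Set ℝ} (hs : s.Finite) :
    ∃ δ > 0, Disjoint (Set.Ioo 0 δ) s := by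
  have : (s \ {0})ᶜ ∈ nhdsWithin (0 : ℝ) (Set.Ioi 0) :=
    nhdsWithin_le_nhds (hs.sdiff.isClosed.compl_mem_nhds (by simp))
  obtain ⟨δ, hδ, hsub⟩ := mem_nhdsGT_iff_exists_Ioo_subset.mp this
  exact ⟨δ, hδ, Set.disjoint_left.mpr fun ε hε hεs => hsub hε ⟨hεs, hε.1.ne'⟩⟩

lemma eq_zero_of_forall_le_add_mul {a b u : ℝ} (h : ∀ t : ℝ, u ≤ t * b + a) : b = 0 := by
  by_contra hb
  have := h ((u - a - 1) / b)
  rw [div_mul_cancel₀ _ hb] at this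
  linarith

lemma nonpos_of_forall_mul_le {a u : ℝ} (h : ∀ t : ℝ, 0 ≤ t → t * a ≤ u) : a ≤ 0 := by
  by_contra! ha
  have := h ((|u| + 1) / a) (by positivity)
  rw [div_mul_cancel₀ _ ha.ne'] at this
  linarith [le_abs_self u]

theorem exists_dual_of_disjoint_interior_cone {E : Type*} [NormedAddCommGroup E]
    [NormedSpace ℝ E] {K : Set E} (hK : Convex ℝ K)
    (hK_smul : ∀ y ∈ K, ∀ t : ℝ, 0 ≤ t → t • y ∈ K) (hKint : (interior K).Nonempty)
    {F : AffineSubspace ℝ E} {x : E} (hxK : x ∈ K) (hxF : x ∈ F)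
    (hdisj : Disjoint (interior K) F) :
    ∃ f : E →L[ℝ] ℝ, f ≠ 0 ∧ (∀ y ∈ K, f y ≤ 0) ∧ (∀ w ∈ F.direction, f w = 0) ∧ f x = 0 := by
  obtain ⟨f, u, hf_int, hf_F⟩ :=
    geometric_hahn_banach_open hK.interior isOpen_interior F.convex hdisj
  have hf_K : ∀ y ∈ K, f y ≤ u := by
    have : closure (interior K) ⊆ f ⁻¹' Set.Iic u :=
      closure_minimal (fun y hy => (hf_int y hy).le) (isClosed_Iic.preimage f.continuous)
    rw [hK.closure_interior_eq_closure_of_nonempty_interior hKint] at this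
    exact fun y hy => this (subset_closure hy)
  have hf_K0 : ∀ y ∈ K, f y ≤ 0 := fun y hy =>
    nonpos_of_forall_mul_le fun t ht => by simpa using hf_K _ (hK_smul y hy t ht)
  have hf_dir : ∀ w ∈ F.direction, f w = 0 := fun w hw =>
    eq_zero_of_forall_le_add_mul fun t => by
      simpa using hf_F _ (AffineSubspace.vadd_mem_of_mem_direction (F.direction.smul_mem t hw) hxF)
  have hu : 0 ≤ u := by simpa using hf_K _ (hK_smul x hxK 0 le_rfl)
  obtain ⟨y₀, hy₀⟩ := hKint
  have hfx : f x = 0 := le_antisymm (hf_K0 x hxK) (hu.trans (hf_F x hxF))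
  have hfy₀ : f y₀ ≠ 0 := ((hf_int y₀ hy₀).trans_le ((hf_F x hxF).trans hfx.le)).ne
  exact ⟨f, fun hf0 => hfy₀ (by simp [hf0]), hf_K0, hf_dir, hfx⟩

section ComplementaryCone

variable {n : ℕ} (M : Matrix (Fin n) (Fin n) ℝ)

lemma convex_coneOf (J : Finset (Fin n ⊕ Fin n)) : Convex ℝ (coneOf M J) := by
  rintro _ ⟨c, hc0, hcJ, rfl⟩ _ ⟨c', hc0', hcJ', rfl⟩ a b ha hb -
  refine ⟨a • c + b • c', fun j => ?_, fun j hj => by simp [hcJ j hj, hcJ' j hj], ?_⟩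
  · exact add_nonneg (mul_nonneg ha (hc0 j)) (mul_nonneg hb (hc0' j))
  · simp [mulVec_add, mulVec_smul]

lemma zero_mem_coneOf (J : Finset (Fin n ⊕ Fin n)) : (0 : Fin n → ℝ) ∈ coneOf M J :=
  ⟨0, fun _ => le_rfl, fun _ _ => rfl, (mulVec_zero _).symm⟩

variable {M}

lemma smul_mem_coneOf {J : Finset (Fin n ⊕ Fin n)} {y : Fin n → ℝ} (hy : y ∈ coneOf M J)
    {t : ℝ} (ht : 0 ≤ t) : t • y ∈ coneOf M J := by
  obtain ⟨c, hc0, hcJ, rfl⟩ := hy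
  exact ⟨t • c, fun j => mul_nonneg ht (hc0 j), fun j hj => by simp [hcJ j hj],
    by simp [mulVec_smul]⟩

lemma transpose_Amat_mem_coneOf {J : Finset (Fin n ⊕ Fin n)} {j : Fin n ⊕ Fin n} (hj : j ∈ J) :
    (Amat M)ᵀ j ∈ coneOf M J := by
  refine ⟨Pi.single j 1, fun k => ?_, fun k hk => ?_, (mulVec_single_one _ j).symm⟩
  · by_cases hkj : k = j <;> simp [hkj]
  · simp [show k ≠ j from fun h => hk (h ▸ hj)]

lemma interior_coneOf_nonempty {B : Finset (Fin n ⊕ Fin n)} (hB : IsBasis M B) :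
    (interior (coneOf M B)).Nonempty := by
  obtain ⟨hcard, hli⟩ := hB
  have hspan : Submodule.span ℝ (Set.range fun j : B => (Amat M)ᵀ j) = ⊤ :=
    hli.span_eq_top_of_card_eq_finrank' (by simp [hcard])
  rw [(convex_coneOf M B).interior_nonempty_iff_affineSpan_eq_top, eq_top_iff]
  have hsub : insert 0 (Set.range fun j : B => (Amat M)ᵀ j) ⊆ coneOf M B := by
    rintro _ (rfl | ⟨j, rfl⟩)
    · exact zero_mem_coneOf M B
    · exact transpose_Amat_mem_coneOf j.2
  refine fun y _ => affineSpan_mono ℝ hsub ?_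
  rw [← SetLike.mem_coe, affineSpan_insert_zero, hspan]
  trivial

lemma mem_span_of_mem_coneOf_of_apply_eq_zero (f : Module.Dual ℝ (Fin n → ℝ))
    {J : Finset (Fin n ⊕ Fin n)} {x : Fin n → ℝ} (hx : x ∈ coneOf M J)
    (hf : ∀ j ∈ J, f ((Amat M)ᵀ j) ≤ 0) (hfx : f x = 0) :
    x ∈ Submodule.span ℝ ((Amat M)ᵀ '' ↑(J.filter fun j => f ((Amat M)ᵀ j) = 0)) := by
  obtain ⟨c, hc0, hcJ, rfl⟩ := hx
  have hsum : Amat M *ᵥ c = ∑ j, c j • (Amat M)ᵀ j := by simp [mulVec_eq_sum]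
  have hterm_nonpos : ∀ j ∈ Finset.univ, c j * f ((Amat M)ᵀ j) ≤ 0 := fun j _ => by
    by_cases hj : j ∈ J
    · exact mul_nonpos_of_nonneg_of_nonpos (hc0 j) (hf j hj)
    · simp [hcJ j hj]
  have hterm_zero : ∀ j, c j * f ((Amat M)ᵀ j) = 0 := by
    have : ∑ j, c j * f ((Amat M)ᵀ j) = 0 := by simpa [hsum] using hfx
    exact fun j => (Finset.sum_eq_zero_iff_of_nonpos hterm_nonpos).mp this j (Finset.mem_univ j)
  rw [hsum]
  refine Submodule.sum_mem _ fun j _ => ?_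
  by_cases hj : j ∈ J ∧ f ((Amat M)ᵀ j) = 0
  · exact Submodule.smul_mem _ _ (Submodule.subset_span ⟨j, Finset.mem_filter.mpr hj, rfl⟩)
  · have hcj : c j = 0 := by
      by_cases hjJ : j ∈ J
      · exact (mul_eq_zero.mp (hterm_zero j)).resolve_right (hj ⟨hjJ, ·⟩)
      · exact hcJ j hjJ
    simp [hcj]

variable {d : ℕ}

def spanRangeCols (M : Matrix (Fin n) (Fin n) ℝ) (Q : Matrix (Fin n) (Fin d) ℝ)
    (T : Finset (Fin n ⊕ Fin n)) : Submodule ℝ (Fin n → ℝ) :=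
  LinearMap.range Q.mulVecLin ⊔ Submodule.span ℝ ((Amat M)ᵀ '' T)

lemma coe_mk'_range_mulVecLin (Q : Matrix (Fin n) (Fin d) ℝ) (q v : Fin n → ℝ) :
    (AffineSubspace.mk' (q + v) (LinearMap.range Q.mulVecLin) : Set (Fin n → ℝ)) =
      {y | ∃ θ : Fin d → ℝ, y = q + Q *ᵥ θ + v} := by
  ext y
  simp only [SetLike.mem_coe, AffineSubspace.mem_mk', LinearMap.mem_range, mulVecLin_apply,
    vsub_eq_sub, Set.mem_ofPred_eq]
  exact exists_congr fun θ => by constructor <;> intro h <;> rw [h] <;> abel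

theorem exists_spanRangeCols_ne_top_of_not_interior {B : Finset (Fin n ⊕ Fin n)}
    (hB : IsBasis M B) (Q : Matrix (Fin n) (Fin d) ℝ) (q v : Fin n → ℝ)
    (hne : ({y | ∃ θ : Fin d → ℝ, y = q + Q *ᵥ θ + v} ∩ coneOf M B).Nonempty)
    (hint : ¬({y | ∃ θ : Fin d → ℝ, y = q + Q *ᵥ θ + v} ∩ interior (coneOf M B)).Nonempty) :
    ∃ T, spanRangeCols M Q T ≠ ⊤ ∧ q + v ∈ spanRangeCols M Q T := by
  set F := AffineSubspace.mk' (q + v) (LinearMap.range Q.mulVecLin)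
  rw [← coe_mk'_range_mulVecLin] at hne hint
  obtain ⟨x, hxF, hxK⟩ := hne
  have hdisj : Disjoint (interior (coneOf M B)) F := by
    rwa [Set.disjoint_iff_inter_eq_empty, Set.inter_comm, ← Set.not_nonempty_iff_eq_empty]
  obtain ⟨f, hf0, hfK, hfQ, hfx⟩ := exists_dual_of_disjoint_interior_cone (convex_coneOf M B)
    (fun y hy t ht => smul_mem_coneOf hy ht) (interior_coneOf_nonempty hB) hxK hxF hdisj
  rw [AffineSubspace.direction_mk'] at hfQ
  set T := B.filter fun j => f ((Amat M)ᵀ j) = 0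
  have hxT : x ∈ Submodule.span ℝ ((Amat M)ᵀ '' ↑T) :=
    mem_span_of_mem_coneOf_of_apply_eq_zero (f : Module.Dual ℝ (Fin n → ℝ)) hxK
      (fun j hj => hfK _ (transpose_Amat_mem_coneOf hj)) hfx
  have hker : spanRangeCols M Q T ≤ LinearMap.ker (f : Module.Dual ℝ (Fin n → ℝ)) := by
    refine sup_le (fun w hw => hfQ w hw) (Submodule.span_le.mpr ?_)
    rintro _ ⟨j, hj, rfl⟩
    exact (Finset.mem_filter.mp hj).2
  refine ⟨T, fun htop => hf0 (ContinuousLinearMap.ext fun z => hker (htop ▸ trivial)), ?_⟩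
  have hxqv : x - (q + v) ∈ LinearMap.range Q.mulVecLin := AffineSubspace.mem_mk'.mp hxF
  rw [show q + v = x - (x - (q + v)) by abel]
  exact Submodule.sub_mem _ (Submodule.mem_sup_right hxT) (Submodule.mem_sup_left hxqv)

end ComplementaryCone

theorem stmt_13_general {n d : ℕ} (M : Matrix (Fin n) (Fin n) ℝ)
    (Q : Matrix (Fin n) (Fin d) ℝ) (q : Fin n → ℝ) :
    ∃ δ > (0 : ℝ), ∀ ε : ℝ, 0 < ε → ε < δ →
      ∀ B : Finset (Fin n ⊕ Fin n), IsComplBasis M B →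
        ({y | ∃ θ : Fin d → ℝ, y = q + Q.mulVec θ + epsVec ε} ∩ coneOf M B).Nonempty →
        ({y | ∃ θ : Fin d → ℝ, y = q + Q.mulVec θ + epsVec ε} ∩
          interior (coneOf M B)).Nonempty := by
  have hfin : (⋃ (T : Finset (Fin n ⊕ Fin n)) (_ : spanRangeCols M Q T ≠ ⊤),
      {ε : ℝ | q + epsVec ε ∈ spanRangeCols M Q T}).Finite :=
    Set.finite_iUnion fun _ => Set.finite_iUnion fun hT =>
      Submodule.finite_setOf_add_epsVec_mem hT q
  obtain ⟨δ, hδ, hgap⟩ := hfin.exists_pos_disjoint_Ioo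
  refine ⟨δ, hδ, fun ε hε hεδ B hB hne => ?_⟩
  by_contra hint
  obtain ⟨T, hT, hmem⟩ := exists_spanRangeCols_ne_top_of_not_interior hB.1 Q q (epsVec ε) hne hint
  exact Set.disjoint_left.mp hgap ⟨hε, hεδ⟩ (Set.mem_biUnion (x := T) hT hmem)

theorem stmt_13 {n d : ℕ} (M : Matrix (Fin n) (Fin n) ℝ) (hM : Suff M)
    (Q : Matrix (Fin n) (Fin d) ℝ) (q : Fin n → ℝ) :
    ∃ δ > (0 : ℝ), ∀ ε : ℝ, 0 < ε → ε < δ →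
      ∀ B : Finset (Fin n ⊕ Fin n), IsComplBasis M B →
        ({y | ∃ θ : Fin d → ℝ, y = q + Q.mulVec θ + epsVec ε} ∩ coneOf M B).Nonempty →
        ({y | ∃ θ : Fin d → ℝ, y = q + Q.mulVec θ + epsVec ε} ∩
          interior (coneOf M B)).Nonempty :=
  stmt_13_general M Q q
end

section
/- For any n×n matrix A_B of full rank and any full-dimensional polyhedral cone 𝒞 = {y : A_B^{-1} y ≥ 0}, the set of ε > 0 for which the shifted affine subspace S^ε = {Qθ + q + (ε,ε²,…,εⁿ)ᵀ : θ ∈ ℝ^d} intersects 𝒞 but not int(𝒞) is finite. -/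
open Matrix


open Polynomial in
lemma auxRootFinite {n : ℕ} (β : Matrix (Fin n) (Fin n) ℝ) (hβ : IsUnit β.det)
    (q : Fin n → ℝ) {lam : Fin n → ℝ} (hlam : lam ≠ 0) :
    {ε : ℝ | lam ⬝ᵥ β.mulVec (q + epsVec ε) = 0}.Finite := by
  classical
  set c : Fin n → ℝ := vecMul lam β with hc
  have hcne : c ≠ 0 := by
    intro h
    apply hlam
    have h1 : vecMul c β⁻¹ = vecMul lam (β * β⁻¹) := by
      rw [hc, vecMul_vecMul]
    rw [h, Matrix.mul_nonsing_inv β hβ, vecMul_one] at h1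
    simpa using h1.symm
  obtain ⟨i, hi⟩ : ∃ i, c i ≠ 0 := Function.ne_iff.mp hcne
  set a : ℝ := lam ⬝ᵥ β.mulVec q with ha
  set p : Polynomial ℝ := C a + ∑ j : Fin n, C (c j) * X ^ ((j : ℕ) + 1) with hp
  have hpne : p ≠ 0 := by
    intro h0
    have hcoeff : p.coeff ((i : ℕ) + 1) = c i := by
      rw [hp]
      rw [Polynomial.coeff_add, Polynomial.finset_sum_coeff]
      simp only [Polynomial.coeff_C_mul, Polynomial.coeff_X_pow, Polynomial.coeff_C]
      rw [Finset.sum_congr rfl (g := fun j => if j = i then c j else 0)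
        (fun j _ => by
          by_cases hji : j = i
          · simp [hji]
          · rw [if_neg (fun h => hji (Fin.ext (Nat.add_right_cancel h.symm)))]
            simp [hji])]
      simp
    rw [h0] at hcoeff
    simp at hcoeff
    exact hi hcoeff.symm
  apply (Polynomial.finite_setOf_isRoot hpne).subset
  intro ε hε
  simp only [Set.mem_setOf_eq] at hε ⊢
  have : p.eval ε = lam ⬝ᵥ β.mulVec (q + epsVec ε) := by
    rw [hp]
    simp only [Polynomial.eval_add, Polynomial.eval_C, Polynomial.eval_finset_sum,
      Polynomial.eval_mul, Polynomial.eval_pow, Polynomial.eval_X]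
    rw [Matrix.mulVec_add, dotProduct_add, ← ha]
    congr 1
    rw [Matrix.dotProduct_mulVec, ← hc]
    simp [dotProduct, epsVec]
  unfold Polynomial.IsRoot
  rw [this, hε]

lemma auxSep {n d : ℕ} (M : Matrix (Fin n) (Fin d) ℝ) (v : Fin n → ℝ)
    (h2 : ¬ ∃ θ : Fin d → ℝ, ∀ i, 0 < (M.mulVec θ + v) i) :
    ∃ lam : Fin n → ℝ, lam ≠ 0 ∧ (∀ i, 0 ≤ lam i) ∧ vecMul lam M = 0 ∧ lam ⬝ᵥ v ≤ 0 := by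
  classical
  set U : Set (Fin n → ℝ) := {x | ∃ θ : Fin d → ℝ, ∀ i, M.mulVec θ i < x i} with hU
  have hUopen : IsOpen U := by
    have : U = ⋃ θ : Fin d → ℝ, ⋂ i : Fin n, {x : Fin n → ℝ | M.mulVec θ i < x i} := by
      ext x; simp [hU, Set.mem_iUnion, Set.mem_iInter]
    rw [this]
    exact isOpen_iUnion fun θ => isOpen_iInter_of_finite fun i =>
      isOpen_lt continuous_const (continuous_apply i)
  have hUconv : Convex ℝ U := by
    rintro x ⟨θx, hx⟩ y ⟨θy, hy⟩ s t hs ht hst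
    refine ⟨s • θx + t • θy, fun i => ?_⟩
    have hm : M.mulVec (s • θx + t • θy) i = s * M.mulVec θx i + t * M.mulVec θy i := by
      rw [Matrix.mulVec_add, Matrix.mulVec_smul, Matrix.mulVec_smul]
      simp
    have h1 : s * M.mulVec θx i ≤ s * x i := mul_le_mul_of_nonneg_left (hx i).le hs
    have h2' : t * M.mulVec θy i ≤ t * y i := mul_le_mul_of_nonneg_left (hy i).le ht
    have hlt : s * M.mulVec θx i + t * M.mulVec θy i < s * x i + t * y i := by
      rcases hs.lt_or_eq with hs' | hs'
      · have := mul_lt_mul_of_pos_left (hx i) hs'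
        linarith
      · have ht' : 0 < t := by rw [← hs'] at hst; linarith
        have := mul_lt_mul_of_pos_left (hy i) ht'
        linarith
    rw [hm]
    simpa using hlt
  have hvU : v ∉ U := by
    rintro ⟨θ, hθ⟩
    exact h2 ⟨-θ, fun i => by
      have := hθ i
      simp only [Pi.add_apply, Matrix.mulVec_neg, Pi.neg_apply]
      linarith⟩
  obtain ⟨f, hf⟩ := geometric_hahn_banach_open_point hUconv hUopen hvU
  have memU : ∀ (θ : Fin d → ℝ) (w : Fin n → ℝ), (∀ i, 0 < w i) → M.mulVec θ + w ∈ U :=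
    fun θ w hw => ⟨θ, fun i => by simp only [Pi.add_apply]; linarith [hw i]⟩
  set lam : Fin n → ℝ := fun i => - f (Pi.single i 1) with hlam
  have frep : ∀ x : Fin n → ℝ, f x = - (lam ⬝ᵥ x) := by
    intro x
    have hx : x = ∑ i : Fin n, x i • (Pi.single i 1 : Fin n → ℝ) := by
      funext j
      simp [Pi.single_apply]
    have h1 : f x = ∑ i : Fin n, x i * f (Pi.single i 1) := by
      conv_lhs => rw [hx]
      rw [map_sum]
      exact Finset.sum_congr rfl fun i _ => by rw [f.map_smul]; simp
    rw [h1]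
    simp only [hlam, dotProduct]
    rw [← Finset.sum_neg_distrib]
    exact Finset.sum_congr rfl fun i _ => by ring
  have h1U : f 1 < f v := by
    have := hf _ (memU 0 1 (fun i => one_pos))
    simpa using this
  have hMzero : ∀ θ : Fin d → ℝ, f (M.mulVec θ) = 0 := by
    intro θ
    have key : ∀ t : ℝ, t * f (M.mulVec θ) + f 1 < f v := by
      intro t
      have := hf _ (memU (t • θ) 1 (fun i => one_pos))
      rw [map_add, Matrix.mulVec_smul, f.map_smul] at this
      simpa [smul_eq_mul] using this
    by_contra hne
    have := key ((f v - f 1) / f (M.mulVec θ))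
    rw [div_mul_cancel₀ _ hne] at this
    linarith
  have hnn : ∀ i, 0 ≤ lam i := by
    intro i
    rw [hlam]
    simp only [neg_nonneg]
    by_contra hpos
    push_neg at hpos
    have key : ∀ t : ℝ, 0 < t → t * f (Pi.single i 1) + f 1 < f v := by
      intro t ht
      set w : Fin n → ℝ := t • (Pi.single i 1 : Fin n → ℝ) + 1 with hwdef
      have hw : ∀ j, 0 < w j := by
        intro j
        rw [hwdef]
        simp only [Pi.add_apply, Pi.smul_apply, Pi.one_apply, smul_eq_mul, Pi.single_apply]
        by_cases hj : i = j
        · simp [hj]; linarith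
        · rw [if_neg (fun h => hj h.symm)]
          norm_num
      have := hf _ (memU 0 w hw)
      rw [hwdef] at this
      rw [Matrix.mulVec_zero, zero_add, map_add, f.map_smul] at this
      simpa [smul_eq_mul] using this
    have hK : 0 < f v - f 1 := by linarith
    have := key ((f v - f 1) / f (Pi.single i 1)) (div_pos hK hpos)
    rw [div_mul_cancel₀ _ (ne_of_gt hpos)] at this
    linarith
  have hfv : 0 ≤ f v := by
    have key : ∀ t : ℝ, 0 < t → t * f 1 < f v := by
      intro t ht
      have := hf _ (memU 0 (t • (1 : Fin n → ℝ)) (fun i => by simp [ht]))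
      rw [Matrix.mulVec_zero, zero_add, f.map_smul] at this
      simpa [smul_eq_mul] using this
    rcases le_or_gt 0 (f 1) with h | h
    · linarith [key 1 one_pos]
    · by_contra hv
      push_neg at hv
      have hδ : 0 < f v / (2 * f 1) := div_pos_of_neg_of_neg hv (by linarith)
      have := key _ hδ
      have h1ne : f 1 ≠ 0 := ne_of_lt h
      have heq : f v / (2 * f 1) * f 1 = f v / 2 := by
        field_simp
      rw [heq] at this
      linarith
  have hlamne : lam ≠ 0 := by
    intro h0
    have : f v = - (lam ⬝ᵥ v) := frep v
    have h1 : f 1 = - (lam ⬝ᵥ 1) := frep 1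
    rw [h0] at this h1
    simp at this h1
    rw [this, h1] at h1U
    exact lt_irrefl 0 h1U
  have hvecMul : vecMul lam M = 0 := by
    have hdot : ∀ θ : Fin d → ℝ, vecMul lam M ⬝ᵥ θ = 0 := by
      intro θ
      rw [← Matrix.dotProduct_mulVec]
      have := hMzero θ
      rw [frep] at this
      linarith
    funext j
    have := hdot (Pi.single j 1)
    rwa [dotProduct_single, mul_one] at this
  refine ⟨lam, hlamne, hnn, hvecMul, ?_⟩
  have := frep v
  linarith [hfv]

/-- `lam` is a valid certificate for the support-complement set `S`. -/
def goodLam {n d : ℕ} (M : Matrix (Fin n) (Fin d) ℝ) (S : Finset (Fin n))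
    (lam : Fin n → ℝ) : Prop :=
  lam ≠ 0 ∧ (∀ i, 0 ≤ lam i) ∧ vecMul lam M = 0 ∧ ∀ i ∈ S, lam i = 0

open scoped Classical in
noncomputable def TSet {n d : ℕ} (β : Matrix (Fin n) (Fin n) ℝ)
    (Q : Matrix (Fin n) (Fin d) ℝ) (q : Fin n → ℝ) (S : Finset (Fin n)) : Set ℝ :=
  if h : ∃ lam, goodLam (β * Q) S lam then
    {ε : ℝ | Classical.choose h ⬝ᵥ β.mulVec (q + epsVec ε) = 0}
  else ∅

lemma TSet_finite {n d : ℕ} (β : Matrix (Fin n) (Fin n) ℝ) (hβ : IsUnit β.det)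
    (Q : Matrix (Fin n) (Fin d) ℝ) (q : Fin n → ℝ) (S : Finset (Fin n)) :
    (TSet β Q q S).Finite := by
  unfold TSet
  classical
  by_cases h : ∃ lam, goodLam (β * Q) S lam
  · rw [dif_pos h]
    exact auxRootFinite β hβ q (Classical.choose_spec h).1
  · rw [dif_neg h]
    exact Set.finite_empty

theorem stmt_14 {n d : ℕ} (β : Matrix (Fin n) (Fin n) ℝ) (hβ : IsUnit β.det)
    (Q : Matrix (Fin n) (Fin d) ℝ) (q : Fin n → ℝ) :
    {ε : ℝ | 0 < ε ∧
      ({y | ∃ θ : Fin d → ℝ, y = Q.mulVec θ + q + epsVec ε} ∩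
        {y | ∀ i, 0 ≤ β.mulVec y i}).Nonempty ∧
      ({y | ∃ θ : Fin d → ℝ, y = Q.mulVec θ + q + epsVec ε} ∩
        {y | ∀ i, 0 < β.mulVec y i}) = ∅}.Finite := by
  classical
  set M := β * Q with hM
  apply (Set.finite_iUnion (TSet_finite β hβ Q q)).subset
  rintro ε ⟨hε, ⟨y, ⟨θf, hyeq⟩, hycone⟩, hempty⟩
  set v : Fin n → ℝ := β.mulVec (q + epsVec ε) with hv
  -- translate to M-v form
  have hbmv : ∀ θ : Fin d → ℝ, β.mulVec (Q.mulVec θ + q + epsVec ε) = M.mulVec θ + v := by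
    intro θ
    rw [add_assoc, Matrix.mulVec_add, hv, hM, ← Matrix.mulVec_mulVec]
  have hfeas : ∀ i, 0 ≤ (M.mulVec θf + v) i := by
    intro i
    rw [← hbmv θf, ← hyeq]
    exact hycone i
  have h2 : ¬ ∃ θ : Fin d → ℝ, ∀ i, 0 < (M.mulVec θ + v) i := by
    rintro ⟨θ, hθ⟩
    have hmem : (Q.mulVec θ + q + epsVec ε) ∈
        ({y | ∃ θ' : Fin d → ℝ, y = Q.mulVec θ' + q + epsVec ε} ∩
          {y | ∀ i, 0 < β.mulVec y i}) := by
      constructor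
      · exact ⟨θ, rfl⟩
      · intro i
        rw [hbmv θ]
        exact hθ i
    rw [hempty] at hmem
    exact hmem
  -- feasibility consequence
  have Lfeas : ∀ μ : Fin n → ℝ, (∀ i, 0 ≤ μ i) → vecMul μ M = 0 → 0 ≤ μ ⬝ᵥ v := by
    intro μ hμnn hμM
    have h1 : μ ⬝ᵥ (M.mulVec θf + v) = μ ⬝ᵥ v := by
      rw [dotProduct_add, Matrix.dotProduct_mulVec, hμM]
      simp
    rw [← h1]
    exact Finset.sum_nonneg fun i _ => mul_nonneg (hμnn i) (hfeas i)
  obtain ⟨lam, hlamne, hlamnn, hlamM, hlamv⟩ := auxSep M v h2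
  have hlamv0 : lam ⬝ᵥ v = 0 := le_antisymm hlamv (Lfeas lam hlamnn hlamM)
  set S : Finset (Fin n) := Finset.univ.filter (fun i => lam i = 0) with hS
  have hex : ∃ μ, goodLam M S μ :=
    ⟨lam, hlamne, hlamnn, hlamM, fun i hi => (Finset.mem_filter.mp hi).2⟩
  refine Set.mem_iUnion.mpr ⟨S, ?_⟩
  rw [TSet, dif_pos hex]
  set μ := Classical.choose hex with hμ
  obtain ⟨hμne, hμnn, hμM, hμS⟩ := Classical.choose_spec hex
  show μ ⬝ᵥ v = 0
  refine le_antisymm ?_ (Lfeas μ hμnn hμM)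
  -- perturbation argument
  set T : Finset (Fin n) := Finset.univ.filter (fun i => lam i ≠ 0) with hT
  have hTne : T.Nonempty := by
    obtain ⟨i, hi⟩ := Function.ne_iff.mp hlamne
    exact ⟨i, Finset.mem_filter.mpr ⟨Finset.mem_univ i, hi⟩⟩
  set t : ℝ := T.inf' hTne (fun i => lam i / (μ i + 1)) with ht
  have htpos : 0 < t := by
    rw [ht, Finset.lt_inf'_iff]
    intro i hi
    have hi' : lam i ≠ 0 := (Finset.mem_filter.mp hi).2
    exact div_pos (lt_of_le_of_ne (hlamnn i) (Ne.symm hi')) (by linarith [hμnn i])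
  set ν : Fin n → ℝ := lam - t • μ with hν
  have hνnn : ∀ i, 0 ≤ ν i := by
    intro i
    rw [hν]
    simp only [Pi.sub_apply, Pi.smul_apply, smul_eq_mul]
    by_cases hli : lam i = 0
    · have : μ i = 0 := hμS i (Finset.mem_filter.mpr ⟨Finset.mem_univ i, hli⟩)
      rw [hli, this]
      ring_nf
      exact le_refl 0
    · have hmem : i ∈ T := Finset.mem_filter.mpr ⟨Finset.mem_univ i, hli⟩
      have hle : t ≤ lam i / (μ i + 1) := by
        rw [ht]
        exact Finset.inf'_le _ hmem
      have hμi : 0 < μ i + 1 := by linarith [hμnn i]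
      have : t * (μ i + 1) ≤ lam i := (le_div_iff₀ hμi).mp hle
      nlinarith
  have hνM : vecMul ν M = 0 := by
    rw [hν, Matrix.sub_vecMul, Matrix.smul_vecMul, hlamM, hμM]
    simp
  have h0 : 0 ≤ ν ⬝ᵥ v := Lfeas ν hνnn hνM
  rw [hν, sub_dotProduct, smul_dotProduct, hlamv0] at h0
  simp only [smul_eq_mul] at h0
  nlinarith
end
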